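/- Let K be a closed real subspace of a complex Hilbert space H that is standard, i.e., K + iK is dense in H and K ∩ iK = {0}. Then the map S : K + iK → H defined by S(ψ₁ + iψ₂) = ψ₁ − iψ₂ for ψ₁, ψ₂ ∈ K is a well-defined, densely defined, closable antilinear operator satisfying S² = 1 on its domain. -/
import Mathlib


/-- The dense domain `K + iK` generated by a real subspace `K` of a complex Hilbert space. -/
def stdDom {H : Type*} [NormedAddCommGroup H] [InnerProductSpace ℂ H]
    (K : Submodule ℝ H) : Set H :=
  {x : H | ∃ a ∈ K, ∃ b ∈ K, x = a + Complex.I • b}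

/-- Let `K` be a closed real subspace of a complex Hilbert space `H` that is standard,
i.e. `K + iK` is dense in `H` and `K ∩ iK = {0}`. Then the map
`S(ψ₁ + iψ₂) = ψ₁ − iψ₂` for `ψ₁, ψ₂ ∈ K` is a well-defined, densely defined,
closable antilinear operator on `K + iK` satisfying `S² = 1` on its domain. -/
theorem stmt_3 {H : Type*} [NormedAddCommGroup H] [InnerProductSpace ℂ H] [CompleteSpace H]
    (K : Submodule ℝ H) (hKclosed : IsClosed (K : Set H))
    (hdense : Dense (stdDom K))
    (htrivial : ∀ x ∈ K, (∃ y ∈ K, x = Complex.I • y) → x = 0) :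
    ∃ S : H → H,
      -- well-defined with the prescribed values on K + iK
      (∀ a ∈ K, ∀ b ∈ K, S (a + Complex.I • b) = a - Complex.I • b) ∧
      -- densely defined
      Dense (stdDom K) ∧
      -- antilinear on its domain
      (∀ x ∈ stdDom K, ∀ y ∈ stdDom K, S (x + y) = S x + S y) ∧
      (∀ (c : ℂ), ∀ x ∈ stdDom K, S (c • x) = (starRingEnd ℂ c) • S x) ∧
      -- involution S² = 1 on the domain
      (∀ x ∈ stdDom K, S x ∈ stdDom K ∧ S (S x) = x) ∧
      -- closable: the closure of the graph is again a graph
      (∀ y : H, ((0 : H), y) ∈ closure {p : H × H | p.1 ∈ stdDom K ∧ S p.1 = p.2} → y = 0) := by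
  classical
  -- uniqueness of the decomposition
  have uniq : ∀ a ∈ K, ∀ b ∈ K, ∀ a' ∈ K, ∀ b' ∈ K,
      a + Complex.I • b = a' + Complex.I • b' → a = a' ∧ b = b' := by
    intro a ha b hb a' ha' b' hb' h
    have h1 : a - a' = Complex.I • (b' - b) := by
      rw [smul_sub]
      linear_combination (norm := module) h
    have h2 : a - a' = 0 :=
      htrivial _ (K.sub_mem ha ha') ⟨b' - b, K.sub_mem hb' hb, h1⟩
    have ha2 : a = a' := by rwa [sub_eq_zero] at h2
    refine ⟨ha2, ?_⟩
    have h3 : Complex.I • (b' - b) = 0 := by rw [← h1, h2]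
    have h4 : b' - b = 0 := by
      rcases smul_eq_zero.mp h3 with h | h
      · exact absurd h Complex.I_ne_zero
      · exact h
    rw [eq_comm, ← sub_eq_zero]
    exact h4
  -- define S
  set S : H → H := fun x =>
    if hx : x ∈ stdDom K then
      hx.choose - Complex.I • hx.choose_spec.2.choose
    else 0 with hSdef
  have hS : ∀ a ∈ K, ∀ b ∈ K, S (a + Complex.I • b) = a - Complex.I • b := by
    intro a ha b hb
    have hx : a + Complex.I • b ∈ stdDom K := ⟨a, ha, b, hb, rfl⟩
    have : S (a + Complex.I • b)
        = hx.choose - Complex.I • hx.choose_spec.2.choose := by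
      rw [hSdef]; exact dif_pos hx
    rw [this]
    have h := uniq a ha b hb _ hx.choose_spec.1 _ hx.choose_spec.2.choose_spec.1
      hx.choose_spec.2.choose_spec.2
    exact congrArg₂ (fun u v => u - Complex.I • v) h.1.symm h.2.symm
  refine ⟨S, hS, hdense, ?_, ?_, ?_, ?_⟩
  · -- additivity
    rintro x ⟨a, ha, b, hb, rfl⟩ y ⟨a', ha', b', hb', rfl⟩
    have h1 : (a + Complex.I • b) + (a' + Complex.I • b')
        = (a + a') + Complex.I • (b + b') := by module
    rw [h1, hS _ (K.add_mem ha ha') _ (K.add_mem hb hb'), hS _ ha _ hb, hS _ ha' _ hb']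
    module
  · -- antilinearity
    rintro c x ⟨a, ha, b, hb, rfl⟩
    have ha' : c.re • a - c.im • b ∈ K := K.sub_mem (K.smul_mem _ ha) (K.smul_mem _ hb)
    have hb' : c.im • a + c.re • b ∈ K := K.add_mem (K.smul_mem _ ha) (K.smul_mem _ hb)
    have h1 : c • (a + Complex.I • b)
        = (c.re • a - c.im • b) + Complex.I • (c.im • a + c.re • b) := by
      simp only [← algebraMap_smul ℂ (_ : ℝ) (_ : H), Complex.coe_algebraMap]
      match_scalars <;> simp [Complex.ext_iff]
    rw [h1, hS _ ha' _ hb', hS _ ha _ hb]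
    simp only [← algebraMap_smul ℂ (_ : ℝ) (_ : H), Complex.coe_algebraMap]
    match_scalars <;> simp [Complex.ext_iff]
  · -- involution
    rintro x ⟨a, ha, b, hb, rfl⟩
    rw [hS _ ha _ hb]
    have h1 : a - Complex.I • b = a + Complex.I • (-b) := by module
    constructor
    · exact ⟨a, ha, -b, K.neg_mem hb, h1⟩
    · rw [h1, hS _ ha _ (K.neg_mem hb)]
      module
  · -- closability
    intro y hy
    obtain ⟨p, hp, hlim⟩ := mem_closure_iff_seq_limit.mp hy
    have hlim1 : Filter.Tendsto (fun n => (p n).1) Filter.atTop (nhds 0) :=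
      (continuous_fst.tendsto _).comp hlim
    have hlim2 : Filter.Tendsto (fun n => (p n).2) Filter.atTop (nhds y) :=
      (continuous_snd.tendsto _).comp hlim
    -- decompose each p n
    choose a haK b hbK hab using fun n => (hp n).1
    have hSp : ∀ n, (p n).2 = a n - Complex.I • b n := by
      intro n
      rw [← (hp n).2, hab n, hS _ (haK n) _ (hbK n)]
    have hA : ∀ n, a n = (1/2 : ℂ) • ((p n).1 + (p n).2) := by
      intro n
      rw [hab n, hSp n]
      module
    have hB : ∀ n, b n = (-Complex.I/2) • ((p n).1 - (p n).2) := by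
      intro n
      rw [hab n, hSp n]
      match_scalars <;> simp [Complex.ext_iff] <;> ring_nf <;> simp
    have hlimA : Filter.Tendsto a Filter.atTop (nhds ((1/2 : ℂ) • y)) := by
      have : Filter.Tendsto (fun n => (1/2 : ℂ) • ((p n).1 + (p n).2)) Filter.atTop
          (nhds ((1/2 : ℂ) • ((0 : H) + y))) := ((hlim1.add hlim2).const_smul _)
      simpa [hA] using this.congr (fun n => (hA n).symm)
    have hlimB : Filter.Tendsto b Filter.atTop (nhds ((-Complex.I/2) • (-y))) := by
      have : Filter.Tendsto (fun n => (-Complex.I/2 : ℂ) • ((p n).1 - (p n).2)) Filter.atTop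
          (nhds ((-Complex.I/2 : ℂ) • ((0 : H) - y))) := ((hlim1.sub hlim2).const_smul _)
      simpa using this.congr (fun n => (hB n).symm)
    have hyK : (1/2 : ℂ) • y ∈ K := hKclosed.mem_of_tendsto hlimA (Filter.Eventually.of_forall haK)
    have hbK' : (-Complex.I/2) • (-y) ∈ K :=
      hKclosed.mem_of_tendsto hlimB (Filter.Eventually.of_forall hbK)
    have hrel : (1/2 : ℂ) • y = Complex.I • (-((-Complex.I/2) • (-y))) := by
      match_scalars <;> simp [Complex.ext_iff] <;> norm_num
    have h0 : (1/2 : ℂ) • y = 0 :=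
      htrivial _ hyK ⟨_, K.neg_mem hbK', hrel⟩
    have := smul_eq_zero.mp h0
    rcases this with h | h
    · norm_num at h
    · exact h
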